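/- Let k1, k2, N be positive integers, p a prime, n2 > 1 odd, and n1, n2, m1 >= N with n1 ≡ m1 (mod p^{N-1}(p-1)). Then B^{★,(-k1,-k2)}_{n1, n2-1} ≡ B^{(-k1,-k2)}_{m1, n2-1} (mod p^N). -/

import Mathlib

/-- Stirling numbers of the second kind. -/
def S2 : ℕ → ℕ → ℕ
  | 0, 0 => 1
  | 0, _ + 1 => 0
  | _ + 1, 0 => 0
  | n + 1, m + 1 => S2 n m + (m + 1) * S2 n (m + 1)
/-- Double-indexed poly-Bernoulli number with negative upper indices
`B_{ℓ1,ℓ2}^{(-k1,-k2)}`, via the explicit formula of Theorem 2.1. -/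
def B2negA (l1 l2 k1 k2 : ℕ) : ℤ :=
  ∑ m1 ∈ Finset.range (l1 + l2 + 1), ∑ m2 ∈ Finset.range (l1 + l2 + 1),
    (-1 : ℤ) ^ (m1 + m2 + l1 + l2) * (Nat.factorial m1 : ℤ) * (Nat.factorial m2 : ℤ) *
      ((m1 : ℤ) + 1) ^ k1 * ((m1 : ℤ) + (m2 : ℤ) + 2) ^ k2 *
      ∑ n ∈ Finset.range (l1 + l2 + 1),
        (S2 n m1 : ℤ) * (S2 (l1 + l2 - n) m2 : ℤ) *
          (if l1 ≤ n then (Nat.choose l2 (n - l1) : ℤ) else 0)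

/-!
Writing `a! S(n, a)` as the `a`-th forward difference of `x ↦ x ^ n` at `0` expresses
`B_{ℓ1,ℓ2}^{(-k1,-k2)}`, for fixed `ℓ2` and all `ℓ1` below a bound, as `∑ⱼ cⱼ (-j) ^ ℓ1` with
coefficients independent of `ℓ1`. For `ℓ1 ≥ N` each power `(-j) ^ ℓ1` is periodic modulo `p ^ N`
with period `φ(p ^ N) = p ^ (N - 1) (p - 1)`: by Euler's theorem when `p ∤ j`, and because it
vanishes when `p ∣ j`.
-/

open Finset Nat fwdDiff

theorem S2_eq_stirlingSecond : S2 = stirlingSecond := by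
  funext n m
  induction n generalizing m with
  | zero => cases m <;> rfl
  | succ n ih =>
    cases m with
    | zero => rfl
    | succ m => rw [S2, stirlingSecond_succ_succ, ih, ih, add_comm]

theorem fwdDiff_iter_succ_natCast_mul_apply_zero (g : ℕ → ℤ) (a : ℕ) :
    (Δ_[1])^[a + 1] (fun x : ℕ ↦ (x : ℤ) * g x) 0 = (a + 1) * (Δ_[1])^[a] g 1 := by
  simp only [fwdDiff_iter_eq_sum_shift, smul_eq_mul, zero_add, mul_one, mul_sum]
  rw [sum_range_succ']
  refine (add_eq_left.2 (by simp)).trans (sum_congr rfl fun j _ ↦ ?_)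
  have hchoose : ((a + 1).choose (j + 1) : ℤ) * (j + 1) = (a + 1) * a.choose j := by
    exact_mod_cast (add_one_mul_choose_eq a j).symm
  rw [Nat.add_sub_add_right, add_comm 1 j]
  push_cast
  linear_combination (-1 : ℤ) ^ (a - j) * g (j + 1) * hchoose

theorem fwdDiff_iter_natCast_pow_apply_zero (n a : ℕ) :
    (Δ_[1])^[a] (fun x : ℕ ↦ (x : ℤ) ^ n) 0 = a ! * stirlingSecond n a := by
  induction n generalizing a with
  | zero =>
    cases a with
    | zero => simp
    | succ a =>
      rw [Function.iterate_succ_apply]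
      simp [fwdDiff_iter_eq_sum_shift]
  | succ n ih =>
    cases a with
    | zero => simp
    | succ a =>
      have hshift : (Δ_[1])^[a] (fun x : ℕ ↦ (x : ℤ) ^ n) 1 =
          (Δ_[1])^[a] (fun x : ℕ ↦ (x : ℤ) ^ n) 0 +
            (Δ_[1])^[a + 1] (fun x : ℕ ↦ (x : ℤ) ^ n) 0 := by
        rw [Function.iterate_succ_apply', fwdDiff, zero_add, add_sub_cancel]
      simp_rw [_root_.pow_succ', fwdDiff_iter_succ_natCast_mul_apply_zero, hshift, ih,
        stirlingSecond_succ_succ, factorial_succ]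
      push_cast
      ring

theorem factorial_mul_stirlingSecond_eq_sum {n a M : ℕ} (ha : a ≤ M) :
    (a ! * stirlingSecond n a : ℤ) =
      ∑ j ∈ range (M + 1), (-1) ^ (a - j) * a.choose j * (j : ℤ) ^ n := by
  rw [← fwdDiff_iter_natCast_pow_apply_zero, fwdDiff_iter_eq_sum_shift]
  simp only [zero_add, smul_eq_mul, mul_one]
  refine sum_subset (range_subset_range.2 (by omega)) fun j _ hj ↦ ?_
  rw [choose_eq_zero_of_lt (by simpa using hj)]
  simp

theorem B2negA_eq_sum_range {l1 l2 M : ℕ} (k1 k2 : ℕ) (hM : l1 + l2 ≤ M) :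
    B2negA l1 l2 k1 k2 = ∑ a ∈ range (M + 1), ∑ b ∈ range (M + 1), ∑ t ∈ range (l2 + 1),
      (-1) ^ (a + b + l1 + l2) * a ! * b ! * ((a : ℤ) + 1) ^ k1 * ((a : ℤ) + b + 2) ^ k2 *
        (stirlingSecond (l1 + t) a * stirlingSecond (l2 - t) b * l2.choose t) := by
  have hsub : range (l1 + l2 + 1) ⊆ range (M + 1) := range_subset_range.2 (by omega)
  have hreindex : ∀ a b : ℕ,
      ∑ n ∈ range (l1 + l2 + 1), (stirlingSecond n a * stirlingSecond (l1 + l2 - n) b : ℤ) *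
          (if l1 ≤ n then (l2.choose (n - l1) : ℤ) else 0) =
        ∑ t ∈ range (l2 + 1),
          (stirlingSecond (l1 + t) a * stirlingSecond (l2 - t) b * l2.choose t : ℤ) := by
    intro a b
    rw [add_assoc, sum_range_add, sum_eq_zero fun n hn ↦ by simp [(mem_range.1 hn).not_ge]]
    refine (zero_add _).trans (sum_congr rfl fun t _ ↦ ?_)
    rw [if_pos (le_add_right l1 t), Nat.add_sub_cancel_left, Nat.add_sub_add_left]
  rw [B2negA, S2_eq_stirlingSecond, sum_subset hsub]
  · refine sum_congr rfl fun a _ ↦ ?_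
    rw [sum_subset hsub]
    · refine sum_congr rfl fun b _ ↦ ?_
      rw [hreindex, mul_sum]
    · intro b _ hb
      refine mul_eq_zero_of_right _ (sum_eq_zero fun n hn ↦ ?_)
      simp only [mem_range, not_lt] at hb hn
      simp [stirlingSecond_eq_zero_of_lt (show l1 + l2 - n < b by omega)]
  · intro a _ ha
    refine sum_eq_zero fun b _ ↦ mul_eq_zero_of_right _ (sum_eq_zero fun n hn ↦ ?_)
    simp only [mem_range, not_lt] at ha hn
    simp [stirlingSecond_eq_zero_of_lt (show n < a by omega)]

theorem B2negA_eq_sum_pow (l2 k1 k2 M : ℕ) : ∃ c : ℕ → ℤ, ∀ l1, l1 + l2 ≤ M →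
    B2negA l1 l2 k1 k2 = ∑ j ∈ range (M + 1), c j * (-(j : ℤ)) ^ l1 := by
  refine ⟨fun j ↦ ∑ a ∈ range (M + 1), ∑ b ∈ range (M + 1), ∑ t ∈ range (l2 + 1),
    (-1) ^ (a + b + l2) * b ! * ((a : ℤ) + 1) ^ k1 * ((a : ℤ) + b + 2) ^ k2 *
      (stirlingSecond (l2 - t) b * l2.choose t) * ((-1) ^ (a - j) * a.choose j * (j : ℤ) ^ t),
    fun l1 hM ↦ ?_⟩
  rw [B2negA_eq_sum_range k1 k2 hM]
  symm
  simp only [sum_mul]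
  rw [sum_comm]
  refine sum_congr rfl fun a ha ↦ ?_
  rw [sum_comm]
  refine sum_congr rfl fun b _ ↦ ?_
  rw [sum_comm]
  refine sum_congr rfl fun t _ ↦ ?_
  have hstirling := factorial_mul_stirlingSecond_eq_sum (n := l1 + t) (mem_range_succ_iff.1 ha)
  calc _ = (-1) ^ (a + b + l1 + l2) * b ! * ((a : ℤ) + 1) ^ k1 * ((a : ℤ) + b + 2) ^ k2 *
        (stirlingSecond (l2 - t) b * l2.choose t) *
          ∑ j ∈ range (M + 1), (-1) ^ (a - j) * a.choose j * (j : ℤ) ^ (l1 + t) := by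
        rw [mul_sum]
        refine sum_congr rfl fun j _ ↦ ?_
        rw [neg_pow]
        ring
    _ = _ := by
        rw [← hstirling]
        ring

theorem Int.pow_modEq_pow_of_modEq_totient {p N n m : ℕ} (hp : p.Prime) (hn : N ≤ n)
    (hm : N ≤ m) (h : n ≡ m [MOD φ (p ^ N)]) (x : ℤ) : x ^ n ≡ x ^ m [ZMOD p ^ N] := by
  by_cases hpx : (p : ℤ) ∣ x
  · have hvanish : ∀ k, N ≤ k → x ^ k ≡ 0 [ZMOD p ^ N] := fun k hk ↦
      Int.modEq_zero_iff_dvd.2 ((pow_dvd_pow_of_dvd hpx N).trans (pow_dvd_pow x hk))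
    exact (hvanish n hn).trans (hvanish m hm).symm
  · have hcop : IsCoprime x ((p ^ N : ℕ) : ℤ) := by
      push_cast
      exact ((Nat.prime_iff_prime_int.1 hp).irreducible.coprime_iff_not_dvd.2 hpx).symm.pow_right
    have heuler : (ZMod.unitOfIsCoprime x hcop) ^ φ (p ^ N) = 1 := ZMod.pow_totient _
    rw [← Nat.cast_pow, ← ZMod.intCast_eq_intCast_iff, Int.cast_pow, Int.cast_pow,
      ← ZMod.coe_unitOfIsCoprime x hcop, ← Units.val_pow_eq_pow_val, ← Units.val_pow_eq_pow_val,
      pow_eq_pow_mod n heuler, pow_eq_pow_mod m heuler, h]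

theorem starDoublePolyBernoulli_periodicity_general (k1 k2 N : ℕ)
    (hN : 0 < N) (p : ℕ) (hp : p.Prime)
    (Bstar : ℕ → ℕ → ℤ)
    (hBstar : ∀ a b : ℕ, Odd b → 1 < b → Bstar a (b - 1) = B2negA a (b - 1) k1 k2)
    (n1 n2 m1 : ℕ) (hodd : Odd n2) (hn2' : 1 < n2)
    (hn1 : N ≤ n1) (hm1 : N ≤ m1)
    (h : n1 ≡ m1 [MOD p ^ (N - 1) * (p - 1)]) :
    Bstar n1 (n2 - 1) ≡ B2negA m1 (n2 - 1) k1 k2 [ZMOD (p : ℤ) ^ N] := by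
  obtain ⟨c, hc⟩ := B2negA_eq_sum_pow (n2 - 1) k1 k2 (n1 + m1 + (n2 - 1))
  rw [← totient_prime_pow hp hN] at h
  rw [hBstar n1 n2 hodd hn2', hc n1 (by omega), hc m1 (by omega)]
  exact Int.ModEq.sum fun j _ ↦ (Int.pow_modEq_pow_of_modEq_totient hp hn1 hm1 h _).mul_left _

/-- Periodicity for the star double-indexed poly-Bernoulli numbers with odd
second index. -/
theorem starDoublePolyBernoulli_periodicity (k1 k2 N : ℕ)
    (hk1 : 0 < k1) (hk2 : 0 < k2) (hN : 0 < N) (p : ℕ) (hp : p.Prime)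
    (Bstar : ℕ → ℕ → ℤ)
    (hBstar : ∀ a b : ℕ, Odd b → 1 < b → Bstar a (b - 1) = B2negA a (b - 1) k1 k2)
    (n1 n2 m1 : ℕ) (hodd : Odd n2) (hn2' : 1 < n2)
    (hn1 : N ≤ n1) (hn2 : N ≤ n2) (hm1 : N ≤ m1)
    (h : n1 ≡ m1 [MOD p ^ (N - 1) * (p - 1)]) :
    Bstar n1 (n2 - 1) ≡ B2negA m1 (n2 - 1) k1 k2 [ZMOD (p : ℤ) ^ N] :=
  starDoublePolyBernoulli_periodicity_general k1 k2 N hN p hp Bstar hBstar n1 n2 m1 hodd hn2' hn1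
    hm1 h
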